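/- arXiv:0902.2479 — 2 statements merged into one kernel-verified Lean document; each statement's English description precedes it below -/
import Mathlib

section
/- Let ν have density ρ with ρ(y) ≤ M/|y|^{1+α} on |y| ≤ 1, α ∈ [1,2), and ∫_{|y|>1}|y| ν(dy) < ∞. Let φ : ℝ → ℝ be Lipschitz with constant L on ℝ, and on the 1-neighborhood D¹ of a bounded interval D let φ be C¹ with φ' Hölder continuous of exponent β−1 for some β ∈ (α, 2), with Hölder seminorm at most H. Then Iφ is Hölder continuous of exponent (β−α)/2 on D: there is a constant C depending on D, α, β such that |Iφ(x₁) − Iφ(x₂)| ≤ C (L + H) |x₁ − x₂|^{(β−α)/2} for all x₁, x₂ ∈ D. -/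
open MeasureTheory Set
open scoped ENNReal NNReal

/-!
For `|y| ≤ 1` the difference of the two integrands is bounded both by `2H|y|^β` (Taylor
expansion at `x₁` and at `x₂`) and by `2H δ^(β-1) |y|` (mean value theorem in the base point,
`δ = |x₁ - x₂|`). Interpolating, it is at most `2H δ^θ |y|^(β-θ)` with `θ = (β - α)/2`, and since
`β - θ > α` this is integrable against `M |y|^(-1-α) dy`. For `|y| > 1` the Lipschitz bound gives
`2L δ |y|`, integrable by the first-moment assumption, and `δ ≤ (r - l)^(1-θ) δ^θ`.
-/

theorem lintegral_comp_abs (f : ℝ → ℝ≥0∞) :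
    ∫⁻ x, f |x| = 2 * ∫⁻ x in Ioi 0, f x := by
  have h_pos : ∫⁻ x in Ioi 0, f |x| = ∫⁻ x in Ioi 0, f x :=
    setLIntegral_congr_fun measurableSet_Ioi fun x hx => by rw [abs_of_pos hx]
  have h_neg : ∫⁻ x in Iic 0, f |x| = ∫⁻ x in Ioi 0, f x := by
    have h := (Measure.measurePreserving_neg (volume : Measure ℝ)).setLIntegral_comp_preimage_emb
      (Homeomorph.neg ℝ).measurableEmbedding (fun x => f |x|) (Ici 0)
    simp only [abs_neg, neg_preimage, neg_Ici, neg_zero] at h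
    rw [h, setLIntegral_congr Ioi_ae_eq_Ici.symm, h_pos]
  rw [← lintegral_add_compl _ measurableSet_Ioi, compl_Ioi, h_pos, h_neg, two_mul]

theorem setLIntegral_abs_rpow {s : ℝ} (hs : -1 < s) :
    ∫⁻ y in {y : ℝ | |y| ≤ 1}, ENNReal.ofReal (|y| ^ s) = ENNReal.ofReal (2 / (s + 1)) := by
  have h_int : ∫ t in Ioc 0 1, t ^ s = 1 / (s + 1) := by
    rw [← intervalIntegral.integral_of_le zero_le_one, integral_rpow (Or.inl hs),
      Real.one_rpow, Real.zero_rpow (by linarith)]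
    ring
  have h_lint : ∫⁻ t in Ioc 0 1, ENNReal.ofReal (t ^ s) = ENNReal.ofReal (1 / (s + 1)) := by
    rw [← h_int, ofReal_integral_eq_lintegral_ofReal
      (intervalIntegral.intervalIntegrable_rpow' hs).1]
    exact (ae_restrict_mem measurableSet_Ioc).mono fun t ht => Real.rpow_nonneg ht.1.le s
  have h_ind : {y : ℝ | |y| ≤ 1}.indicator (fun y => ENNReal.ofReal (|y| ^ s))
      = fun y => (Iic 1).indicator (fun t => ENNReal.ofReal (t ^ s)) |y| := by
    ext y; simp [indicator]
  rw [← lintegral_indicator (measurableSet_le measurable_abs measurable_const), h_ind,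
    lintegral_comp_abs, lintegral_indicator measurableSet_Iic,
    Measure.restrict_restrict measurableSet_Iic, Iic_inter_Ioi, h_lint,
    ← ENNReal.ofReal_ofNat 2, ← ENNReal.ofReal_mul zero_le_two]
  ring_nf

section WithDensity

variable {ρ : ℝ → ℝ≥0∞} {M α p a b : ℝ} {f : ℝ → ℝ}

theorem setLIntegral_abs_rpow_withDensity_le (hM : 0 ≤ M)
    (hρ : ∀ y : ℝ, y ≠ 0 → |y| ≤ 1 → ρ y ≤ ENNReal.ofReal (M / |y| ^ (1 + α))) (hp : α < p) :
    ∫⁻ y in {y : ℝ | |y| ≤ 1}, ENNReal.ofReal (|y| ^ p) ∂volume.withDensity ρ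
      ≤ ENNReal.ofReal (M * (2 / (p - α))) := by
  have hB : MeasurableSet {y : ℝ | |y| ≤ 1} := measurableSet_le measurable_abs measurable_const
  -- `ρ` need not be measurable, so pass to the measurable majorant `d`.
  set d : ℝ → ℝ≥0∞ := fun y => ENNReal.ofReal (M / |y| ^ (1 + α))
  have hne : ∀ᵐ y ∂volume.restrict {y : ℝ | |y| ≤ 1}, y ≠ 0 :=
    ae_restrict_of_ae (Measure.ae_ne volume 0)
  have hρd : ρ ≤ᵐ[volume.restrict {y : ℝ | |y| ≤ 1}] d := by
    filter_upwards [ae_restrict_mem hB, hne] with y hy hy0 using hρ y hy0 hy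
  have h_pt : ∀ᵐ y ∂volume.restrict {y : ℝ | |y| ≤ 1}, d y * ENNReal.ofReal (|y| ^ p)
      ≤ ENNReal.ofReal M * ENNReal.ofReal (|y| ^ (p - α - 1)) := by
    filter_upwards [hne] with y hy
    rw [← ENNReal.ofReal_mul (by positivity), ← ENNReal.ofReal_mul hM, div_mul_eq_mul_div,
      mul_div_assoc, ← Real.rpow_sub (abs_pos.2 hy), sub_sub, add_comm α]
  calc ∫⁻ y in {y : ℝ | |y| ≤ 1}, ENNReal.ofReal (|y| ^ p) ∂volume.withDensity ρ
      ≤ ∫⁻ y, ENNReal.ofReal (|y| ^ p) ∂(volume.restrict {y : ℝ | |y| ≤ 1}).withDensity d := by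
        rw [restrict_withDensity hB]
        exact lintegral_mono' (withDensity_mono hρd) le_rfl
    _ = ∫⁻ y in {y : ℝ | |y| ≤ 1}, d y * ENNReal.ofReal (|y| ^ p) :=
        lintegral_withDensity_eq_lintegral_mul _ (by fun_prop) (by fun_prop)
    _ ≤ ∫⁻ y in {y : ℝ | |y| ≤ 1}, ENNReal.ofReal M * ENNReal.ofReal (|y| ^ (p - α - 1)) :=
        lintegral_mono_ae h_pt
    _ = ENNReal.ofReal (M * (2 / (p - α))) := by
        rw [lintegral_const_mul _ (by fun_prop), setLIntegral_abs_rpow (by linarith),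
          ← ENNReal.ofReal_mul hM, sub_add_cancel]

theorem integrableOn_abs_rpow_withDensity (hM : 0 ≤ M)
    (hρ : ∀ y : ℝ, y ≠ 0 → |y| ≤ 1 → ρ y ≤ ENNReal.ofReal (M / |y| ^ (1 + α))) (hp : α < p) :
    IntegrableOn (fun y => |y| ^ p) {y : ℝ | |y| ≤ 1} (volume.withDensity ρ) := by
  refine ⟨(measurable_abs.pow_const p).aestronglyMeasurable,
    (hasFiniteIntegral_iff_ofReal (ae_of_all _ fun y => by positivity)).2 ?_⟩
  exact (setLIntegral_abs_rpow_withDensity_le hM hρ hp).trans_lt ENNReal.ofReal_lt_top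

theorem setIntegral_abs_rpow_withDensity_le (hM : 0 ≤ M)
    (hρ : ∀ y : ℝ, y ≠ 0 → |y| ≤ 1 → ρ y ≤ ENNReal.ofReal (M / |y| ^ (1 + α))) (hp : α < p) :
    ∫ y in {y : ℝ | |y| ≤ 1}, |y| ^ p ∂volume.withDensity ρ ≤ M * (2 / (p - α)) := by
  rw [integral_eq_lintegral_of_nonneg_ae (ae_of_all _ fun y => by positivity)
    (measurable_abs.pow_const p).aestronglyMeasurable]
  exact ENNReal.toReal_le_of_le_ofReal (by have := sub_pos.2 hp; positivity)
    (setLIntegral_abs_rpow_withDensity_le hM hρ hp)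

theorem compl_setOf_abs_le_one : {y : ℝ | |y| ≤ 1}ᶜ = {y : ℝ | 1 < |y|} := by
  ext y; simp

theorem abs_le_piecewise_of_abs_le (hsmall : ∀ y, |y| ≤ 1 → |f y| ≤ a * |y| ^ p)
    (hlarge : ∀ y, 1 < |y| → |f y| ≤ b * |y|) (y : ℝ) :
    |f y| ≤ {y : ℝ | |y| ≤ 1}.piecewise (fun y => a * |y| ^ p) (fun y => b * |y|) y := by
  by_cases hy : |y| ≤ 1
  · simpa [piecewise, hy] using hsmall y hy
  · simpa [piecewise, hy] using hlarge y (not_le.1 hy)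

theorem integrable_piecewise_withDensity (hM : 0 ≤ M)
    (hρ : ∀ y : ℝ, y ≠ 0 → |y| ≤ 1 → ρ y ≤ ENNReal.ofReal (M / |y| ^ (1 + α))) (hp : α < p)
    (hmom : IntegrableOn (fun y => |y|) {y : ℝ | 1 < |y|} (volume.withDensity ρ)) :
    Integrable ({y : ℝ | |y| ≤ 1}.piecewise (fun y => a * |y| ^ p) (fun y => b * |y|))
      (volume.withDensity ρ) :=
  Integrable.piecewise (measurableSet_le measurable_abs measurable_const)
    ((integrableOn_abs_rpow_withDensity hM hρ hp).const_mul a)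
    (compl_setOf_abs_le_one ▸ hmom.const_mul b)

theorem integral_piecewise_withDensity_le (hM : 0 ≤ M)
    (hρ : ∀ y : ℝ, y ≠ 0 → |y| ≤ 1 → ρ y ≤ ENNReal.ofReal (M / |y| ^ (1 + α))) (hp : α < p)
    (hmom : IntegrableOn (fun y => |y|) {y : ℝ | 1 < |y|} (volume.withDensity ρ)) (ha : 0 ≤ a) :
    ∫ y, {y : ℝ | |y| ≤ 1}.piecewise (fun y => a * |y| ^ p) (fun y => b * |y|) y
        ∂volume.withDensity ρ
      ≤ a * (M * (2 / (p - α))) + b * ∫ y in {y : ℝ | 1 < |y|}, |y| ∂volume.withDensity ρ := by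
  rw [integral_piecewise (measurableSet_le measurable_abs measurable_const)
    ((integrableOn_abs_rpow_withDensity hM hρ hp).const_mul a)
    (compl_setOf_abs_le_one ▸ hmom.const_mul b), compl_setOf_abs_le_one, integral_const_mul,
    integral_const_mul]
  gcongr
  exact setIntegral_abs_rpow_withDensity_le hM hρ hp

theorem integrable_withDensity_of_abs_le (hM : 0 ≤ M)
    (hρ : ∀ y : ℝ, y ≠ 0 → |y| ≤ 1 → ρ y ≤ ENNReal.ofReal (M / |y| ^ (1 + α))) (hp : α < p)
    (hmom : IntegrableOn (fun y => |y|) {y : ℝ | 1 < |y|} (volume.withDensity ρ))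
    (hf : AEStronglyMeasurable f (volume.withDensity ρ))
    (hsmall : ∀ y, |y| ≤ 1 → |f y| ≤ a * |y| ^ p) (hlarge : ∀ y, 1 < |y| → |f y| ≤ b * |y|) :
    Integrable f (volume.withDensity ρ) :=
  (integrable_piecewise_withDensity hM hρ hp hmom).mono' hf
    (ae_of_all _ (abs_le_piecewise_of_abs_le hsmall hlarge))

theorem integral_abs_withDensity_le (hM : 0 ≤ M)
    (hρ : ∀ y : ℝ, y ≠ 0 → |y| ≤ 1 → ρ y ≤ ENNReal.ofReal (M / |y| ^ (1 + α))) (hp : α < p)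
    (hmom : IntegrableOn (fun y => |y|) {y : ℝ | 1 < |y|} (volume.withDensity ρ)) (ha : 0 ≤ a)
    (hsmall : ∀ y, |y| ≤ 1 → |f y| ≤ a * |y| ^ p) (hlarge : ∀ y, 1 < |y| → |f y| ≤ b * |y|) :
    ∫ y, |f y| ∂volume.withDensity ρ
      ≤ a * (M * (2 / (p - α))) + b * ∫ y in {y : ℝ | 1 < |y|}, |y| ∂volume.withDensity ρ :=
  (integral_mono_of_nonneg (ae_of_all _ fun y => abs_nonneg (f y))
    (integrable_piecewise_withDensity hM hρ hp hmom)
    (ae_of_all _ (abs_le_piecewise_of_abs_le hsmall hlarge))).trans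
    (integral_piecewise_withDensity_le hM hρ hp hmom ha)

end WithDensity


theorem abs_sub_le_of_hasDerivAt_uIcc {ψ ψ' : ℝ → ℝ} {a b K : ℝ}
    (hψ : ∀ t ∈ uIcc a b, HasDerivAt ψ (ψ' t) t) (hK : ∀ t ∈ uIcc a b, |ψ' t| ≤ K) :
    |ψ b - ψ a| ≤ K * |b - a| := by
  simpa [Real.norm_eq_abs] using (convex_uIcc a b).norm_image_sub_le_of_norm_hasDerivWithin_le
    (fun t ht => (hψ t ht).hasDerivWithinAt) hK left_mem_uIcc right_mem_uIcc

theorem abs_le_abs_of_mem_uIcc_zero {t y : ℝ} (ht : t ∈ uIcc 0 y) : |t| ≤ |y| := by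
  simpa using abs_sub_left_of_mem_uIcc ht

theorem abs_sub_sub_mul_le_of_holder_deriv {f f' : ℝ → ℝ} {x y H β : ℝ} (hβ : 1 ≤ β)
    (hH : 0 ≤ H) (hf : ∀ t ∈ uIcc 0 y, HasDerivAt f (f' (x + t)) (x + t))
    (hf' : ∀ t ∈ uIcc 0 y, |f' (x + t) - f' x| ≤ H * |t| ^ (β - 1)) :
    |f (x + y) - f x - y * f' x| ≤ H * |y| ^ β := by
  have hderiv : ∀ t ∈ uIcc 0 y,
      HasDerivAt (fun t => f (x + t) - t * f' x) (f' (x + t) - f' x) t := fun t ht => by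
    simpa using (HasDerivAt.comp_const_add x t (hf t ht)).fun_sub
      ((hasDerivAt_id t).mul_const (f' x))
  have hbound : ∀ t ∈ uIcc 0 y, |f' (x + t) - f' x| ≤ H * |y| ^ (β - 1) := fun t ht =>
    (hf' t ht).trans (mul_le_mul_of_nonneg_left
      (Real.rpow_le_rpow (abs_nonneg t) (abs_le_abs_of_mem_uIcc_zero ht) (by linarith)) hH)
  have h := abs_sub_le_of_hasDerivAt_uIcc hderiv hbound
  rw [sub_zero, mul_assoc, ← Real.rpow_add_one' (abs_nonneg y) (by linarith), sub_add_cancel]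
    at h
  simpa [sub_right_comm] using h

theorem abs_sub_sub_sub_le_of_deriv_le {f f' : ℝ → ℝ} {x₁ x₂ y K : ℝ}
    (hf₁ : ∀ t ∈ uIcc 0 y, HasDerivAt f (f' (x₁ + t)) (x₁ + t))
    (hf₂ : ∀ t ∈ uIcc 0 y, HasDerivAt f (f' (x₂ + t)) (x₂ + t))
    (hK : ∀ t ∈ uIcc 0 y, |f' (x₁ + t) - f' (x₂ + t)| ≤ K) :
    |f (x₁ + y) - f (x₂ + y) - (f x₁ - f x₂)| ≤ K * |y| := by
  have hderiv : ∀ t ∈ uIcc 0 y,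
      HasDerivAt (fun t => f (x₁ + t) - f (x₂ + t)) (f' (x₁ + t) - f' (x₂ + t)) t :=
    fun t ht => (HasDerivAt.comp_const_add x₁ t (hf₁ t ht)).fun_sub
      (HasDerivAt.comp_const_add x₂ t (hf₂ t ht))
  simpa using abs_sub_le_of_hasDerivAt_uIcc hderiv hK

theorem min_rpow_le_rpow_mul_rpow {s δ β θ : ℝ} (hs : 0 ≤ s) (hδ : 0 ≤ δ) (hβ : 1 < β)
    (hθ : 0 ≤ θ) (hθβ : θ ≤ β - 1) :
    min (s ^ β) (δ ^ (β - 1) * s) ≤ δ ^ θ * s ^ (β - θ) := by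
  rcases le_total s δ with hsδ | hδs
  · calc min (s ^ β) (δ ^ (β - 1) * s) ≤ s ^ θ * s ^ (β - θ) := by
          rw [← Real.rpow_add' hs (by linarith), add_sub_cancel]
          exact min_le_left _ _
      _ ≤ δ ^ θ * s ^ (β - θ) := by gcongr
  · calc min (s ^ β) (δ ^ (β - 1) * s) ≤ δ ^ θ * δ ^ (β - 1 - θ) * s := by
          rw [← Real.rpow_add' hδ (by linarith), add_sub_cancel]
          exact min_le_right _ _
      _ ≤ δ ^ θ * s ^ (β - 1 - θ) * s := by gcongr
      _ = δ ^ θ * s ^ (β - θ) := by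
          rw [mul_assoc, ← Real.rpow_add_one' hs (by linarith)]
          ring_nf

theorem le_rpow_mul_rpow_of_le {δ R θ : ℝ} (hδ : 0 ≤ δ) (hδR : δ ≤ R) (hθ : θ ≤ 1) :
    δ ≤ R ^ (1 - θ) * δ ^ θ :=
  calc δ = δ ^ (1 - θ) * δ ^ θ := by
        rw [← Real.rpow_add' hδ (by norm_num), sub_add_cancel, Real.rpow_one]
    _ ≤ R ^ (1 - θ) * δ ^ θ := by gcongr

theorem nonneg_of_abs_sub_le_mul_rpow {g : ℝ → ℝ} {s : Set ℝ} {a b H γ : ℝ} (ha : a ∈ s)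
    (hb : b ∈ s) (hab : a ≠ b) (hH : ∀ x₁ ∈ s, ∀ x₂ ∈ s, |g x₁ - g x₂| ≤ H * |x₁ - x₂| ^ γ) :
    0 ≤ H :=
  nonneg_of_mul_nonneg_left ((abs_nonneg _).trans (hH a ha b hb))
    (Real.rpow_pos_of_pos (abs_pos.2 (sub_ne_zero.2 hab)) γ)

theorem add_mem_Ioo {l r x y t : ℝ} (hx : x ∈ Ioo l r) (hy : |y| ≤ 1) (ht : t ∈ uIcc 0 y) :
    x + t ∈ Ioo (l - 1) (r + 1) := by
  have := abs_le.1 ((abs_le_abs_of_mem_uIcc_zero ht).trans hy)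
  exact ⟨by linarith [hx.1], by linarith [hx.2]⟩

noncomputable def compensatedIncrement (φ φ' : ℝ → ℝ) (x y : ℝ) : ℝ :=
  φ (x + y) - φ x - if |y| ≤ 1 then y * φ' x else 0

namespace compensatedIncrement

variable {φ φ' : ℝ → ℝ} {ρ : ℝ → ℝ≥0∞} {M α l r β H L x x₁ x₂ y : ℝ}

theorem measurable (hφ : Continuous φ) : Measurable (compensatedIncrement φ φ' x) :=
  ((hφ.comp (continuous_const_add x)).measurable.sub measurable_const).sub
    (Measurable.ite (measurableSet_le measurable_abs measurable_const)
      (measurable_id.mul_const _) measurable_const)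

theorem abs_le_of_abs_le_one (hβ : 1 ≤ β) (hH0 : 0 ≤ H)
    (hd : ∀ x ∈ Ioo (l - 1) (r + 1), HasDerivAt φ (φ' x) x)
    (hH : ∀ x₁ ∈ Ioo (l - 1) (r + 1), ∀ x₂ ∈ Ioo (l - 1) (r + 1),
      |φ' x₁ - φ' x₂| ≤ H * |x₁ - x₂| ^ (β - 1))
    (hx : x ∈ Ioo l r) (hy : |y| ≤ 1) :
    |compensatedIncrement φ φ' x y| ≤ H * |y| ^ β := by
  have hx' : x ∈ Ioo (l - 1) (r + 1) := by simpa using add_mem_Ioo hx hy left_mem_uIcc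
  rw [compensatedIncrement, if_pos hy]
  refine abs_sub_sub_mul_le_of_holder_deriv hβ hH0 (fun t ht => hd _ (add_mem_Ioo hx hy ht))
    fun t ht => ?_
  simpa using hH _ (add_mem_Ioo hx hy ht) x hx'

theorem abs_le_of_one_lt (hL : ∀ x₁ x₂ : ℝ, |φ x₁ - φ x₂| ≤ L * |x₁ - x₂|) (hy : 1 < |y|) :
    |compensatedIncrement φ φ' x y| ≤ L * |y| := by
  rw [compensatedIncrement, if_neg (not_le.2 hy), sub_zero]
  simpa using hL (x + y) x

theorem abs_sub_le_of_abs_le_one {θ : ℝ} (hβ : 1 < β) (hθ : 0 ≤ θ) (hθβ : θ ≤ β - 1)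
    (hH0 : 0 ≤ H) (hd : ∀ x ∈ Ioo (l - 1) (r + 1), HasDerivAt φ (φ' x) x)
    (hH : ∀ x₁ ∈ Ioo (l - 1) (r + 1), ∀ x₂ ∈ Ioo (l - 1) (r + 1),
      |φ' x₁ - φ' x₂| ≤ H * |x₁ - x₂| ^ (β - 1))
    (hx₁ : x₁ ∈ Ioo l r) (hx₂ : x₂ ∈ Ioo l r) (hy : |y| ≤ 1) :
    |compensatedIncrement φ φ' x₁ y - compensatedIncrement φ φ' x₂ y|
      ≤ 2 * H * |x₁ - x₂| ^ θ * |y| ^ (β - θ) := by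
  have h_taylor : |compensatedIncrement φ φ' x₁ y - compensatedIncrement φ φ' x₂ y|
      ≤ 2 * H * |y| ^ β := by
    have h₁ := abs_le_of_abs_le_one hβ.le hH0 hd hH hx₁ hy
    have h₂ := abs_le_of_abs_le_one hβ.le hH0 hd hH hx₂ hy
    exact (abs_sub _ _).trans (by linarith)
  have h_shift : |compensatedIncrement φ φ' x₁ y - compensatedIncrement φ φ' x₂ y|
      ≤ 2 * H * (|x₁ - x₂| ^ (β - 1) * |y|) := by
    have hx₁' : x₁ ∈ Ioo (l - 1) (r + 1) := by simpa using add_mem_Ioo hx₁ hy left_mem_uIcc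
    have hx₂' : x₂ ∈ Ioo (l - 1) (r + 1) := by simpa using add_mem_Ioo hx₂ hy left_mem_uIcc
    have h₁ := abs_sub_sub_sub_le_of_deriv_le (fun t ht => hd _ (add_mem_Ioo hx₁ hy ht))
      (fun t ht => hd _ (add_mem_Ioo hx₂ hy ht)) fun t ht => by
        simpa using hH _ (add_mem_Ioo hx₁ hy ht) _ (add_mem_Ioo hx₂ hy ht)
    have h₂ : |y * (φ' x₁ - φ' x₂)| ≤ |y| * (H * |x₁ - x₂| ^ (β - 1)) := by
      rw [abs_mul]; gcongr; exact hH _ hx₁' _ hx₂'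
    rw [compensatedIncrement, compensatedIncrement, if_pos hy, if_pos hy]
    calc _ = |(φ (x₁ + y) - φ (x₂ + y) - (φ x₁ - φ x₂)) - y * (φ' x₁ - φ' x₂)| := by ring_nf
      _ ≤ _ := (abs_sub _ _).trans (add_le_add h₁ h₂)
      _ = _ := by ring
  calc _ ≤ min (2 * H * |y| ^ β) (2 * H * (|x₁ - x₂| ^ (β - 1) * |y|)) :=
        le_min h_taylor h_shift
    _ = 2 * H * min (|y| ^ β) (|x₁ - x₂| ^ (β - 1) * |y|) :=
        (mul_min_of_nonneg _ _ (by positivity)).symm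
    _ ≤ 2 * H * (|x₁ - x₂| ^ θ * |y| ^ (β - θ)) := by
        gcongr; exact min_rpow_le_rpow_mul_rpow (abs_nonneg _) (abs_nonneg _) hβ hθ hθβ
    _ = _ := by ring

theorem abs_sub_le_of_one_lt (hL0 : 0 ≤ L) (hL : ∀ x₁ x₂ : ℝ, |φ x₁ - φ x₂| ≤ L * |x₁ - x₂|)
    (hy : 1 < |y|) :
    |compensatedIncrement φ φ' x₁ y - compensatedIncrement φ φ' x₂ y|
      ≤ 2 * L * |x₁ - x₂| * |y| := by
  rw [compensatedIncrement, compensatedIncrement, if_neg (not_le.2 hy), if_neg (not_le.2 hy)]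
  have h₁ := hL (x₁ + y) (x₂ + y)
  have h₂ := hL x₁ x₂
  rw [add_sub_add_right_eq_sub] at h₁
  calc _ = |(φ (x₁ + y) - φ (x₂ + y)) - (φ x₁ - φ x₂)| := by ring_nf
    _ ≤ 2 * L * |x₁ - x₂| * 1 := by linarith [abs_sub (φ (x₁ + y) - φ (x₂ + y)) (φ x₁ - φ x₂)]
    _ ≤ 2 * L * |x₁ - x₂| * |y| := by gcongr

theorem integrable (hM : 0 ≤ M)
    (hρ : ∀ y : ℝ, y ≠ 0 → |y| ≤ 1 → ρ y ≤ ENNReal.ofReal (M / |y| ^ (1 + α)))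
    (hmom : IntegrableOn (fun y => |y|) {y : ℝ | 1 < |y|} (volume.withDensity ρ))
    (hβα : α < β) (hβ : 1 ≤ β) (hH0 : 0 ≤ H) (hφ : Continuous φ)
    (hL : ∀ x₁ x₂ : ℝ, |φ x₁ - φ x₂| ≤ L * |x₁ - x₂|)
    (hd : ∀ x ∈ Ioo (l - 1) (r + 1), HasDerivAt φ (φ' x) x)
    (hH : ∀ x₁ ∈ Ioo (l - 1) (r + 1), ∀ x₂ ∈ Ioo (l - 1) (r + 1),
      |φ' x₁ - φ' x₂| ≤ H * |x₁ - x₂| ^ (β - 1))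
    (hx : x ∈ Ioo l r) :
    Integrable (compensatedIncrement φ φ' x) (volume.withDensity ρ) :=
  integrable_withDensity_of_abs_le hM hρ hβα hmom (measurable hφ).aestronglyMeasurable
    (fun _ hy => abs_le_of_abs_le_one hβ hH0 hd hH hx hy) (fun _ hy => abs_le_of_one_lt hL hy)

theorem integral_abs_sub_le (hM : 0 ≤ M)
    (hρ : ∀ y : ℝ, y ≠ 0 → |y| ≤ 1 → ρ y ≤ ENNReal.ofReal (M / |y| ^ (1 + α)))
    (hmom : IntegrableOn (fun y => |y|) {y : ℝ | 1 < |y|} (volume.withDensity ρ))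
    (hα : 1 ≤ α) (hβα : α < β) (hH0 : 0 ≤ H) (hL0 : 0 ≤ L)
    (hL : ∀ x₁ x₂ : ℝ, |φ x₁ - φ x₂| ≤ L * |x₁ - x₂|)
    (hd : ∀ x ∈ Ioo (l - 1) (r + 1), HasDerivAt φ (φ' x) x)
    (hH : ∀ x₁ ∈ Ioo (l - 1) (r + 1), ∀ x₂ ∈ Ioo (l - 1) (r + 1),
      |φ' x₁ - φ' x₂| ≤ H * |x₁ - x₂| ^ (β - 1))
    (hx₁ : x₁ ∈ Ioo l r) (hx₂ : x₂ ∈ Ioo l r) :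
    ∫ y, |compensatedIncrement φ φ' x₁ y - compensatedIncrement φ φ' x₂ y| ∂volume.withDensity ρ
      ≤ 2 * H * |x₁ - x₂| ^ ((β - α) / 2) * (M * (2 / ((β - α) / 2)))
        + 2 * L * |x₁ - x₂| * ∫ y in {y : ℝ | 1 < |y|}, |y| ∂volume.withDensity ρ := by
  have h := integral_abs_withDensity_le hM hρ (p := β - (β - α) / 2) (by linarith) hmom
    (by positivity)
    (fun y hy => abs_sub_le_of_abs_le_one (by linarith) (by linarith) (by linarith) hH0 hd hH
      hx₁ hx₂ hy)
    (fun y hy => abs_sub_le_of_one_lt hL0 hL hy)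
  rwa [show β - (β - α) / 2 - α = (β - α) / 2 by ring] at h

end compensatedIncrement

theorem stmt_2_general
    (ν : Measure ℝ) (ρ : ℝ → ℝ≥0∞) (M α β L H l r : ℝ)
    (hν : ν = MeasureTheory.volume.withDensity ρ)
    (hM : 0 < M) (hα1 : 1 ≤ α)
    (hρ : ∀ y : ℝ, y ≠ 0 → |y| ≤ 1 → ρ y ≤ ENNReal.ofReal (M / |y| ^ (1 + α)))
    (hmom : IntegrableOn (fun y => |y|) {y : ℝ | 1 < |y|} ν)
    (hlr : l < r) (hβα : α < β) (hβ2 : β < 2)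
    (φ φ' : ℝ → ℝ)
    (hL : ∀ x₁ x₂ : ℝ, |φ x₁ - φ x₂| ≤ L * |x₁ - x₂|)
    (hd : ∀ x ∈ Ioo (l - 1) (r + 1), HasDerivAt φ (φ' x) x)
    (hH : ∀ x₁ ∈ Ioo (l - 1) (r + 1), ∀ x₂ ∈ Ioo (l - 1) (r + 1),
      |φ' x₁ - φ' x₂| ≤ H * |x₁ - x₂| ^ (β - 1)) :
    ∃ C : ℝ, 0 < C ∧ ∀ x₁ ∈ Ioo l r, ∀ x₂ ∈ Ioo l r,
      |(∫ y, (φ (x₁ + y) - φ x₁ - (if |y| ≤ 1 then y * φ' x₁ else 0)) ∂ν) -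
        ∫ y, (φ (x₂ + y) - φ x₂ - (if |y| ≤ 1 then y * φ' x₂ else 0)) ∂ν| ≤
      C * (L + H) * |x₁ - x₂| ^ ((β - α) / 2) := by
  subst hν
  set θ := (β - α) / 2 with hθ
  set K := ∫ y in {y : ℝ | 1 < |y|}, |y| ∂volume.withDensity ρ
  have hK : 0 ≤ K := setIntegral_nonneg (measurableSet_lt measurable_const measurable_abs)
    fun y _ => abs_nonneg y
  have hR : 0 ≤ (r - l) ^ (1 - θ) := Real.rpow_nonneg (sub_nonneg.2 hlr.le) _
  have hL0 : 0 ≤ L := (abs_nonneg _).trans (by simpa using hL 1 0)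
  have hφ : Continuous φ :=
    (LipschitzWith.of_dist_le' fun a b => by simpa [Real.dist_eq] using hL a b).continuous
  refine ⟨4 * M / θ + 2 * K * (r - l) ^ (1 - θ), by positivity, fun x₁ hx₁ x₂ hx₂ => ?_⟩
  have hH0 : 0 ≤ H := nonneg_of_abs_sub_le_mul_rpow
    (by simpa using add_mem_Ioo hx₁ (y := 1 / 2) (by norm_num) left_mem_uIcc)
    (add_mem_Ioo hx₁ (y := 1 / 2) (by norm_num) right_mem_uIcc) (by simp) hH
  have hδ : |x₁ - x₂| ≤ (r - l) ^ (1 - θ) * |x₁ - x₂| ^ θ := le_rpow_mul_rpow_of_le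
    (abs_nonneg _) (abs_sub_le_iff.2 ⟨by linarith [hx₁.2, hx₂.1], by linarith [hx₁.1, hx₂.2]⟩)
    (by linarith)
  show |(∫ y, compensatedIncrement φ φ' x₁ y ∂_) - ∫ y, compensatedIncrement φ φ' x₂ y ∂_| ≤ _
  rw [← integral_sub (compensatedIncrement.integrable hM.le hρ hmom hβα (by linarith) hH0 hφ hL
    hd hH hx₁) (compensatedIncrement.integrable hM.le hρ hmom hβα (by linarith) hH0 hφ hL hd hH
    hx₂)]
  calc _ ≤ _ := abs_integral_le_integral_abs
    _ ≤ _ := compensatedIncrement.integral_abs_sub_le hM.le hρ hmom hα1 hβα hH0 hL0 hL hd hH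
        hx₁ hx₂
    _ ≤ 2 * H * |x₁ - x₂| ^ θ * (M * (2 / θ))
          + 2 * L * ((r - l) ^ (1 - θ) * |x₁ - x₂| ^ θ) * K := by gcongr
    _ = (4 * M / θ + 2 * K * (r - l) ^ (1 - θ)) * (L + H) * |x₁ - x₂| ^ θ
          - (4 * M / θ * L + 2 * K * (r - l) ^ (1 - θ) * H) * |x₁ - x₂| ^ θ := by ring
    _ ≤ _ := sub_le_self _ (by positivity)

theorem stmt_2
    (ν : Measure ℝ) (ρ : ℝ → ℝ≥0∞) (M α β L H l r : ℝ)
    (hν : ν = MeasureTheory.volume.withDensity ρ)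
    (hM : 0 < M) (hα1 : 1 ≤ α) (hα2 : α < 2)
    (hρ : ∀ y : ℝ, y ≠ 0 → |y| ≤ 1 → ρ y ≤ ENNReal.ofReal (M / |y| ^ (1 + α)))
    (hmom : IntegrableOn (fun y => |y|) {y : ℝ | 1 < |y|} ν)
    (hlr : l < r) (hβα : α < β) (hβ2 : β < 2)
    (φ φ' : ℝ → ℝ)
    (hL : ∀ x₁ x₂ : ℝ, |φ x₁ - φ x₂| ≤ L * |x₁ - x₂|)
    (hd : ∀ x ∈ Ioo (l - 1) (r + 1), HasDerivAt φ (φ' x) x)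
    (hH : ∀ x₁ ∈ Ioo (l - 1) (r + 1), ∀ x₂ ∈ Ioo (l - 1) (r + 1),
      |φ' x₁ - φ' x₂| ≤ H * |x₁ - x₂| ^ (β - 1)) :
    ∃ C : ℝ, 0 < C ∧ ∀ x₁ ∈ Ioo l r, ∀ x₂ ∈ Ioo l r,
      |(∫ y, (φ (x₁ + y) - φ x₁ - (if |y| ≤ 1 then y * φ' x₁ else 0)) ∂ν) -
        ∫ y, (φ (x₂ + y) - φ x₂ - (if |y| ≤ 1 then y * φ' x₂ else 0)) ∂ν| ≤
      C * (L + H) * |x₁ - x₂| ^ ((β - α) / 2) :=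
  stmt_2_general ν ρ M α β L H l r hν hM hα1 hρ hmom hlr hβα hβ2 φ φ' hL hd hH
end

section
/- Maximum principle for a nonlocal parabolic operator: Let a, b, c : ℝ × [0,T] → ℝ be continuous with a > 0, a and b bounded, and c ≥ −C₀ for some constant C₀ ≥ 0. Let ν be a Lévy measure with ∫_{|y|≤1} y² ν(dy) < ∞ and ∫_{|y|>1} |y| ν(dy) < ∞. Suppose v is continuous on ℝ × [0,T], C^{2,1} on ℝ × (0,T], bounded from below, and satisfies ∂_t v(x,t) − a(x,t) ∂²_{xx} v(x,t) − b(x,t) ∂_x v(x,t) − I v(x,t) + c(x,t) v(x,t) ≥ 0 for all (x,t) ∈ ℝ × (0,T], where I v(x,t) = ∫_ℝ [v(x+y,t) − v(x,t) − y ∂_x v(x,t) 1_{|y|≤1}] ν(dy). If v(x,0) ≥ 0 for all x ∈ ℝ, then v ≥ 0 on ℝ × [0,T]. -/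
/-!
Perturb `v` by `ε w` with the barrier `w(x,t) = e^{C₀ t} (⟨x⟩ + C₁ t)`, `⟨x⟩ = √(1 + x²)`
(the paper uses `f(|x|)` with `f(R) = R²/(1+R)`; any smooth function growing like `|x|` with
bounded first and second derivatives does). As `⟨x⟩ ≥ |x|` and `v ≥ -m`, `u = v + ε w` is
positive for large `|x|` and at `t = 0`, so if it ever became nonpositive it would first vanish
at some `(x₀, t₀)` with `t₀ > 0`, staying `≥ 0` on `ℝ × [0, t₀]`. There `∂ₜu ≤ 0`, `∂ₓu = 0`,
`∂ₓₓu ≥ 0` and the Lévy integrand of `u` is nonnegative. Since `⟨·⟩` and `⟨·⟩'` are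
`1`-Lipschitz, the Lévy integrand of `⟨·⟩` is bounded by `y²` for `|y| ≤ 1` and by `|y|`
beyond, a weight with finite `ν`-integral `K`; for `C₁ > Ma + Mb + K` the barrier dominates
every term of the operator, and the supersolution inequality for `v` fails at `(x₀, t₀)`.
Letting `ε → 0` gives `v ≥ 0`.
-/

open MeasureTheory Set Filter Topology Real
open scoped NNReal

noncomputable section

def bracket (x : ℝ) : ℝ := √(1 + x ^ 2)

lemma bracket_pos (x : ℝ) : 0 < bracket x := sqrt_pos.2 (by positivity)

lemma abs_le_bracket (x : ℝ) : |x| ≤ bracket x := abs_le_sqrt (by linarith)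

lemma one_le_bracket (x : ℝ) : 1 ≤ bracket x := one_le_sqrt.2 (by nlinarith)

lemma hasDerivAt_bracket (x : ℝ) : HasDerivAt bracket (x / bracket x) x := by
  refine (((hasDerivAt_pow 2 x).const_add 1).sqrt (by positivity)).congr_deriv ?_
  simp only [bracket]
  field_simp
  norm_num

lemma hasDerivAt_div_bracket (x : ℝ) :
    HasDerivAt (fun x => x / bracket x) ((bracket x ^ 3)⁻¹) x := by
  refine ((hasDerivAt_id' x).div (hasDerivAt_bracket x) (bracket_pos x).ne').congr_deriv ?_
  have hsq : bracket x ^ 2 = 1 + x ^ 2 := sq_sqrt (by positivity)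
  have := (bracket_pos x).ne'
  field_simp
  linear_combination hsq

lemma abs_div_bracket_le_one (x : ℝ) : |x / bracket x| ≤ 1 := by
  rw [abs_div, abs_of_pos (bracket_pos x), div_le_one (bracket_pos x)]
  exact abs_le_bracket x

lemma inv_bracket_pow_three_mem_Icc (x : ℝ) : (bracket x ^ 3)⁻¹ ∈ Icc 0 1 :=
  ⟨by positivity [bracket_pos x], inv_le_one_of_one_le₀ (one_le_pow₀ (one_le_bracket x))⟩

lemma lipschitzWith_of_hasDerivAt_abs_le {f f' : ℝ → ℝ} {K : ℝ≥0}
    (hf : ∀ x, HasDerivAt f (f' x) x) (hf' : ∀ x, |f' x| ≤ K) : LipschitzWith K f :=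
  lipschitzWith_of_nnnorm_deriv_le (fun x => (hf x).differentiableAt) fun x => by
    rw [(hf x).deriv, ← NNReal.coe_le_coe, coe_nnnorm]
    exact hf' x

lemma lipschitzWith_bracket : LipschitzWith 1 bracket :=
  lipschitzWith_of_hasDerivAt_abs_le hasDerivAt_bracket fun x => by
    simpa using abs_div_bracket_le_one x

lemma lipschitzWith_div_bracket : LipschitzWith 1 fun x => x / bracket x :=
  lipschitzWith_of_hasDerivAt_abs_le hasDerivAt_div_bracket fun x => by
    obtain ⟨h0, h1⟩ := inv_bracket_pow_three_mem_Icc x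
    simpa [abs_of_nonneg h0] using h1

lemma abs_sub_sub_mul_le_of_lipschitzWith {f f' : ℝ → ℝ} {K : ℝ≥0}
    (hf : ∀ x, HasDerivAt f (f' x) x) (hf' : LipschitzWith K f') (x y : ℝ) :
    |f (x + y) - f x - y * f' x| ≤ K * y ^ 2 := by
  have hderiv : ∀ s ∈ Metric.closedBall (0 : ℝ) |y|, HasDerivWithinAt
      (fun s => f (x + s) - s * f' x) (f' (x + s) - f' x) (Metric.closedBall 0 |y|) s := by
    intro s _
    have := ((hf (x + s)).comp_const_add x s).sub ((hasDerivAt_id' s).mul_const (f' x))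
    exact (this.congr_deriv (by ring)).hasDerivWithinAt
  have hbound : ∀ s ∈ Metric.closedBall (0 : ℝ) |y|, ‖f' (x + s) - f' x‖ ≤ K * |y| := by
    intro s hs
    rw [mem_closedBall_zero_iff, Real.norm_eq_abs] at hs
    calc ‖f' (x + s) - f' x‖ ≤ K * |x + s - x| := by
          simpa [← Real.dist_eq] using hf'.dist_le_mul (x + s) x
      _ ≤ K * |y| := by rw [add_sub_cancel_left]; gcongr
  have := (convex_closedBall (0 : ℝ) |y|).norm_image_sub_le_of_norm_hasDerivWithin_le hderiv
    hbound (Metric.mem_closedBall_self (abs_nonneg y)) (mem_closedBall_zero_iff.2 le_rfl)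
  simp only [add_zero, zero_mul, sub_zero, Real.norm_eq_abs] at this
  calc |f (x + y) - f x - y * f' x| = |f (x + y) - y * f' x - f x| := by ring_nf
    _ ≤ K * |y| * |y| := this
    _ = K * y ^ 2 := by rw [mul_assoc, ← sq, sq_abs]

def levyIntegrand (f : ℝ → ℝ) (d x y : ℝ) : ℝ :=
  f (x + y) - f x - if |y| ≤ 1 then y * d else 0

def levyWeight (y : ℝ) : ℝ := if |y| ≤ 1 then y ^ 2 else |y|

lemma levyWeight_nonneg (y : ℝ) : 0 ≤ levyWeight y := by
  unfold levyWeight; split_ifs <;> positivity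

lemma integrable_levyWeight {ν : Measure ℝ}
    (h1 : IntegrableOn (fun y => y ^ 2) {y : ℝ | |y| ≤ 1} ν)
    (h2 : IntegrableOn (fun y => |y|) {y : ℝ | 1 < |y|} ν) : Integrable levyWeight ν := by
  have hs : MeasurableSet {y : ℝ | |y| ≤ 1} := measurableSet_le measurable_abs measurable_const
  have hc : {y : ℝ | |y| ≤ 1}ᶜ = {y : ℝ | 1 < |y|} := by ext; simp
  refine (Integrable.piecewise hs h1 (hc ▸ h2)).congr (Eventually.of_forall fun y => ?_)
  simp [Set.piecewise, levyWeight]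

lemma abs_levyIntegrand_le {f f' : ℝ → ℝ} {K : ℝ≥0} (hf : ∀ x, HasDerivAt f (f' x) x)
    (hfK : LipschitzWith K f) (hf'K : LipschitzWith K f') (x y : ℝ) :
    |levyIntegrand f (f' x) x y| ≤ K * levyWeight y := by
  unfold levyIntegrand levyWeight
  split_ifs
  · exact abs_sub_sub_mul_le_of_lipschitzWith hf hf'K x y
  · simpa [← Real.dist_eq] using hfK.dist_le_mul (x + y) x

lemma measurable_levyIntegrand {f : ℝ → ℝ} (hf : Continuous f) (d x : ℝ) :
    Measurable (levyIntegrand f d x) :=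
  ((hf.comp (continuous_const_add x)).measurable.sub measurable_const).sub
    (Measurable.ite (measurableSet_le measurable_abs measurable_const)
      (measurable_id.mul_const _) measurable_const)

lemma levyIntegrand_nonneg_of_forall_le {f : ℝ → ℝ} {x : ℝ} (h : ∀ z, f x ≤ f z) (y : ℝ) :
    0 ≤ levyIntegrand f 0 x y := by
  simpa [levyIntegrand] using h (x + y)

/-- `f` need not be integrable: the Bochner integral is then `0`, and the bound holds as `G ≥ 0`. -/
lemma neg_integral_le_integral_of_add_nonneg {α : Type*} [MeasurableSpace α] {μ : Measure α}
    {f g G : α → ℝ} (hG : Integrable G μ) (hg : AEStronglyMeasurable g μ)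
    (hgG : ∀ y, |g y| ≤ G y) (hfg : ∀ y, 0 ≤ f y + g y) : -∫ y, G y ∂μ ≤ ∫ y, f y ∂μ := by
  have hgi : Integrable g μ := hG.mono' hg (Eventually.of_forall hgG)
  by_cases hf : Integrable f μ
  · have h1 : 0 ≤ ∫ y, (f y + g y) ∂μ := integral_nonneg hfg
    have h2 : ∫ y, g y ∂μ ≤ ∫ y, G y ∂μ :=
      integral_mono hgi hG fun y => (le_abs_self _).trans (hgG y)
    rw [integral_add hf hgi] at h1
    linarith
  · rw [integral_undef hf, neg_nonpos]
    exact integral_nonneg fun y => (abs_nonneg _).trans (hgG y)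

lemma neg_mul_integral_levyWeight_le {ν : Measure ℝ} (hw : Integrable levyWeight ν)
    {f g g' : ℝ → ℝ} (hg : ∀ x, HasDerivAt g (g' x) x)
    (hgL : LipschitzWith 1 g) (hg'L : LipschitzWith 1 g') {c d x : ℝ} (hc : 0 ≤ c)
    (hd : d + c * g' x = 0) (hmin : ∀ z, f x + c * g x ≤ f z + c * g z) :
    -(c * ∫ y, levyWeight y ∂ν) ≤ ∫ y, levyIntegrand f d x y ∂ν := by
  rw [← integral_const_mul]
  refine neg_integral_le_integral_of_add_nonneg (g := fun y => c * levyIntegrand g (g' x) x y)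
    (hw.const_mul c)
    ((measurable_levyIntegrand hgL.continuous _ x).const_mul c).aestronglyMeasurable
    (fun y => ?_) (fun y => ?_)
  · rw [abs_mul, abs_of_nonneg hc]
    simpa using mul_le_mul_of_nonneg_left (abs_levyIntegrand_le hg hgL hg'L x y) hc
  · have := levyIntegrand_nonneg_of_forall_le (f := fun z => f z + c * g z) hmin y
    simp only [levyIntegrand] at this ⊢
    split_ifs at this ⊢
    · linear_combination this + y * hd
    · linarith

lemma HasDerivAt.nonpos_of_isLocalMinOn_Iic {g : ℝ → ℝ} {d t : ℝ} (hg : HasDerivAt g d t)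
    (hmin : IsLocalMinOn g (Iic t) t) : d ≤ 0 := by
  have hcone : (-1 : ℝ) ∈ posTangentConeAt (Iic t) t :=
    mem_posTangentConeAt_of_segment_subset <| by
      rw [segment_symm, segment_eq_Icc (by linarith)]
      exact Icc_subset_Iic_self
  simpa using hmin.hasFDerivWithinAt_nonneg hg.hasFDerivAt.hasFDerivWithinAt hcone

/-- If the second derivative were negative, `x` would also be a local maximum by the
second-derivative test, so `g` would be locally constant and `g''` would vanish. -/
lemma IsLocalMin.nonneg_of_hasDerivAt_of_hasDerivAt {g g' : ℝ → ℝ} {g'' x : ℝ}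
    (hmin : IsLocalMin g x) (hg : ∀ z, HasDerivAt g (g' z) z) (hg' : HasDerivAt g' g'' x) :
    0 ≤ g'' := by
  by_contra! hneg
  have hderiv : deriv g = g' := funext fun z => (hg z).deriv
  have hmax : IsLocalMax g x := isLocalMax_of_deriv_deriv_neg (by rwa [hderiv, hg'.deriv])
    (by rw [hderiv]; exact hmin.hasDerivAt_eq_zero (hg x)) (hg x).continuousAt
  have hconst : g =ᶠ[𝓝 x] fun _ => g x :=
    (hmin.and hmax).mono fun z hz => le_antisymm hz.2 hz.1
  have : g' =ᶠ[𝓝 x] fun _ => 0 := by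
    simpa [hderiv] using hconst.deriv
  exact hneg.ne' ((hasDerivAt_const x (0 : ℝ)).congr_of_eventuallyEq this |>.unique hg')

lemma exists_first_zero_of_continuousOn {u : ℝ → ℝ → ℝ} {T R : ℝ}
    (hu : ContinuousOn (fun q : ℝ × ℝ => u q.1 q.2) (univ ×ˢ Icc 0 T))
    (hinit : ∀ x, 0 < u x 0) (hfar : ∀ x, ∀ t ∈ Icc 0 T, R ≤ |x| → 0 < u x t)
    {x₁ t₁ : ℝ} (ht₁ : t₁ ∈ Icc 0 T) (hx₁ : u x₁ t₁ ≤ 0) :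
    ∃ x₀, ∃ t₀ ∈ Ioc 0 T, u x₀ t₀ = 0 ∧ ∀ t ∈ Icc 0 t₀, ∀ x, 0 ≤ u x t := by
  set S : Set (ℝ × ℝ) := (Icc (-R) R ×ˢ Icc 0 T) ∩ {q | u q.1 q.2 ≤ 0}
  have hS : IsCompact S := (isCompact_Icc.prod isCompact_Icc).of_isClosed_subset
    ((hu.mono (prod_mono (subset_univ _) subset_rfl)).preimage_isClosed_of_isClosed
      (isClosed_Icc.prod isClosed_Icc) isClosed_Iic) inter_subset_left
  have hmem : ∀ x, ∀ t ∈ Icc 0 T, u x t ≤ 0 → t ∈ Prod.snd '' S := fun x t ht hxt =>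
    ⟨(x, t), ⟨⟨abs_le.1 (not_le.1 fun h => (hfar x t ht h).not_ge hxt).le, ht⟩, hxt⟩, rfl⟩
  have hT : IsCompact (Prod.snd '' S) := hS.image continuous_snd
  obtain ⟨⟨x₀, t₀⟩, ⟨⟨-, ht₀⟩, hx₀⟩, hinf⟩ := hT.sInf_mem ⟨t₁, hmem x₁ t₁ ht₁ hx₁⟩
  have hbefore : ∀ t ∈ Ico 0 t₀, ∀ x, 0 < u x t := fun t ht x => not_le.1 fun h =>
    ht.2.not_ge (by
      rw [show t₀ = _ from hinf]
      exact csInf_le hT.bddBelow (hmem x t ⟨ht.1, ht.2.le.trans ht₀.2⟩ h))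
  have hpos : 0 < t₀ := ht₀.1.lt_of_ne fun h => (hinit x₀).not_ge (h ▸ hx₀)
  have hat : ∀ x, 0 ≤ u x t₀ := by
    intro x
    have hcont : ContinuousWithinAt (fun t => u x t) (Iio t₀) t₀ :=
      ((hu.comp (Continuous.prodMk_right x).continuousOn fun t ht => ⟨mem_univ x, ht⟩) t₀ ht₀
        |>.mono_of_mem_nhdsWithin (mem_of_superset (Ico_mem_nhdsLT hpos)
          (Ico_subset_Icc_self.trans (Icc_subset_Icc_right ht₀.2))))
    exact ge_of_tendsto hcont
      (eventually_of_mem (Ico_mem_nhdsLT hpos) fun t ht => (hbefore t ht x).le)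
  refine ⟨x₀, t₀, ⟨hpos, ht₀.2⟩, le_antisymm hx₀ (hat x₀), fun t ht x => ?_⟩
  rcases ht.2.lt_or_eq with hlt | rfl
  exacts [(hbefore t ⟨ht.1, hlt⟩ x).le, hat x]

def barrier (C₀ C₁ x t : ℝ) : ℝ := exp (C₀ * t) * (bracket x + C₁ * t)

section Barrier

variable {C₀ C₁ x t : ℝ}

lemma abs_le_barrier (hC₀ : 0 ≤ C₀) (hC₁ : 0 ≤ C₁) (ht : 0 ≤ t) :
    |x| ≤ barrier C₀ C₁ x t := by
  have h : |x| ≤ bracket x + C₁ * t := by nlinarith [abs_le_bracket x]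
  exact h.trans (le_mul_of_one_le_left ((abs_nonneg x).trans h) (one_le_exp (by positivity)))

lemma lt_mul_barrier {m ε : ℝ} (hC₀ : 0 ≤ C₀) (hC₁ : 0 ≤ C₁) (ht : 0 ≤ t) (hε : 0 < ε)
    (hx : m / ε + 1 ≤ |x|) : m < ε * barrier C₀ C₁ x t :=
  calc m < ε * (m / ε + 1) := by field_simp; linarith
    _ ≤ ε * barrier C₀ C₁ x t := by gcongr; exact hx.trans (abs_le_barrier hC₀ hC₁ ht)

lemma barrier_pos (hC₁ : 0 ≤ C₁) (ht : 0 ≤ t) : 0 < barrier C₀ C₁ x t := by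
  unfold barrier; have := bracket_pos x; positivity

@[simp] lemma barrier_zero_right : barrier C₀ C₁ x 0 = bracket x := by simp [barrier]

lemma continuous_barrier : Continuous fun q : ℝ × ℝ => barrier C₀ C₁ q.1 q.2 := by
  unfold barrier
  have := lipschitzWith_bracket.continuous
  fun_prop

lemma hasDerivAt_barrier_time :
    HasDerivAt (fun t => barrier C₀ C₁ x t) (C₀ * barrier C₀ C₁ x t + exp (C₀ * t) * C₁) t :=
  (((hasDerivAt_id' t).const_mul C₀).exp.mul
    (((hasDerivAt_id' t).const_mul C₁).const_add (bracket x))).congr_deriv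
    (by simp only [barrier]; ring)

lemma hasDerivAt_barrier_space :
    HasDerivAt (fun x => barrier C₀ C₁ x t) (exp (C₀ * t) * (x / bracket x)) x :=
  ((hasDerivAt_bracket x).add_const (C₁ * t)).const_mul (exp (C₀ * t))

lemma barrier_supersolution {a b c Ma Mb : ℝ} (hC₁ : 0 ≤ C₁) (ht : 0 ≤ t)
    (ha : 0 ≤ a) (haM : a ≤ Ma) (hb : |b| ≤ Mb) (hc : -C₀ ≤ c) :
    exp (C₀ * t) * (C₁ - Ma - Mb) ≤ C₀ * barrier C₀ C₁ x t + exp (C₀ * t) * C₁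
      - a * (exp (C₀ * t) * (bracket x ^ 3)⁻¹) - b * (exp (C₀ * t) * (x / bracket x))
      + c * barrier C₀ C₁ x t := by
  obtain ⟨h0, h1⟩ := inv_bracket_pow_three_mem_Icc x
  have hE := exp_pos (C₀ * t)
  have hab : a * (bracket x ^ 3)⁻¹ ≤ Ma := by nlinarith
  have hbb : b * (x / bracket x) ≤ Mb := by
    calc b * (x / bracket x) ≤ |b| * |x / bracket x| := by rw [← abs_mul]; exact le_abs_self _
      _ ≤ Mb := by nlinarith [abs_div_bracket_le_one x, abs_nonneg b, abs_nonneg (x / bracket x)]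
  nlinarith [mul_le_mul_of_nonneg_left hab hE.le, mul_le_mul_of_nonneg_left hbb hE.le,
    mul_nonneg (by linarith : 0 ≤ c + C₀) (barrier_pos (C₀ := C₀) (x := x) hC₁ ht).le]

end Barrier

def levyParabolicOperator (a b c : ℝ → ℝ → ℝ) (ν : Measure ℝ) (v vt vx vxx : ℝ → ℝ → ℝ)
    (x t : ℝ) : ℝ :=
  vt x t - a x t * vxx x t - b x t * vx x t -
    (∫ y, levyIntegrand (fun z => v z t) (vx x t) x y ∂ν) + c x t * v x t

lemma levyParabolicOperator_neg_of_touching {a b c : ℝ → ℝ → ℝ} {ν : Measure ℝ}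
    {v vt vx vxx : ℝ → ℝ → ℝ} {Ma Mb C₀ C₁ ε x₀ t₀ : ℝ} (hw : Integrable levyWeight ν)
    (hC₁ : Ma + Mb + ∫ y, levyWeight y ∂ν < C₁) (hε : 0 < ε) (ht₀ : 0 < t₀)
    (ha : 0 < a x₀ t₀) (haM : |a x₀ t₀| ≤ Ma) (hb : |b x₀ t₀| ≤ Mb) (hc : -C₀ ≤ c x₀ t₀)
    (hvt : HasDerivAt (fun s => v x₀ s) (vt x₀ t₀) t₀)
    (hvx : ∀ z, HasDerivAt (fun z => v z t₀) (vx z t₀) z)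
    (hvxx : HasDerivAt (fun z => vx z t₀) (vxx x₀ t₀) x₀)
    (hzero : v x₀ t₀ + ε * barrier C₀ C₁ x₀ t₀ = 0)
    (hnonneg : ∀ t ∈ Icc 0 t₀, ∀ x, 0 ≤ v x t + ε * barrier C₀ C₁ x t) :
    levyParabolicOperator a b c ν v vt vx vxx x₀ t₀ < 0 := by
  have hC₁₀ : 0 ≤ C₁ := by
    linarith [(abs_nonneg _).trans haM, (abs_nonneg _).trans hb,
      integral_nonneg (μ := ν) (f := levyWeight) levyWeight_nonneg]
  have hux : ∀ z, HasDerivAt (fun z => v z t₀ + ε * barrier C₀ C₁ z t₀)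
      (vx z t₀ + ε * (exp (C₀ * t₀) * (z / bracket z))) z := fun z =>
    (hvx z).add (hasDerivAt_barrier_space.const_mul ε)
  have hmin : IsLocalMin (fun z => v z t₀ + ε * barrier C₀ C₁ z t₀) x₀ :=
    Eventually.of_forall fun z => hzero.trans_le (hnonneg t₀ ⟨ht₀.le, le_rfl⟩ z)
  have hx : vx x₀ t₀ + ε * (exp (C₀ * t₀) * (x₀ / bracket x₀)) = 0 :=
    hmin.hasDerivAt_eq_zero (hux x₀)
  have hxx : 0 ≤ vxx x₀ t₀ + ε * (exp (C₀ * t₀) * (bracket x₀ ^ 3)⁻¹) :=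
    hmin.nonneg_of_hasDerivAt_of_hasDerivAt hux
      (hvxx.add (((hasDerivAt_div_bracket x₀).const_mul (exp (C₀ * t₀))).const_mul ε))
  have ht : vt x₀ t₀ + ε * (C₀ * barrier C₀ C₁ x₀ t₀ + exp (C₀ * t₀) * C₁) ≤ 0 :=
    (hvt.add (hasDerivAt_barrier_time.const_mul ε)).nonpos_of_isLocalMinOn_Iic
      (eventually_of_mem (Icc_mem_nhdsLE ht₀) fun t ht => hzero.trans_le (hnonneg t ht x₀))
  have hJ : -(ε * exp (C₀ * t₀) * ∫ y, levyWeight y ∂ν) ≤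
      ∫ y, levyIntegrand (fun z => v z t₀) (vx x₀ t₀) x₀ y ∂ν :=
    neg_mul_integral_levyWeight_le hw hasDerivAt_bracket lipschitzWith_bracket
      lipschitzWith_div_bracket (by positivity) (by linear_combination hx) fun z => by
        have := hnonneg t₀ ⟨ht₀.le, le_rfl⟩ z
        simp only [barrier] at hzero this
        linarith
  have hsuper := barrier_supersolution (x := x₀) hC₁₀ ht₀.le ha.le (le_of_abs_le haM) hb hc
  unfold levyParabolicOperator
  nlinarith [mul_le_mul_of_nonneg_left hsuper hε.le, mul_nonneg ha.le hxx,
    congrArg (b x₀ t₀ * ·) hx, congrArg (c x₀ t₀ * ·) hzero,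
    mul_pos (mul_pos hε (exp_pos (C₀ * t₀))) (sub_pos.2 hC₁)]

theorem stmt_13_general
    (T : ℝ)
    (a b c : ℝ → ℝ → ℝ)
    (ha_pos : ∀ x : ℝ, ∀ t ∈ Icc (0:ℝ) T, 0 < a x t)
    (Ma Mb : ℝ)
    (ha_bd : ∀ x : ℝ, ∀ t ∈ Icc (0:ℝ) T, |a x t| ≤ Ma)
    (hb_bd : ∀ x : ℝ, ∀ t ∈ Icc (0:ℝ) T, |b x t| ≤ Mb)
    (C₀ : ℝ) (hC₀ : 0 ≤ C₀)
    (hc_lb : ∀ x : ℝ, ∀ t ∈ Icc (0:ℝ) T, -C₀ ≤ c x t)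
    (ν : Measure ℝ)
    (h1 : IntegrableOn (fun y => y ^ 2) {y : ℝ | |y| ≤ 1} ν)
    (h2 : IntegrableOn (fun y => |y|) {y : ℝ | 1 < |y|} ν)
    (v vt vx vxx : ℝ → ℝ → ℝ)
    (hv_cont : ContinuousOn (fun q : ℝ × ℝ => v q.1 q.2) (univ ×ˢ Icc 0 T))
    (m : ℝ) (hv_lb : ∀ x : ℝ, ∀ t ∈ Icc (0:ℝ) T, -m ≤ v x t)
    (hvt : ∀ x : ℝ, ∀ t ∈ Ioc (0:ℝ) T, HasDerivAt (fun s => v x s) (vt x t) t)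
    (hvx : ∀ x : ℝ, ∀ t ∈ Ioc (0:ℝ) T, HasDerivAt (fun z => v z t) (vx x t) x)
    (hvxx : ∀ x : ℝ, ∀ t ∈ Ioc (0:ℝ) T, HasDerivAt (fun z => vx z t) (vxx x t) x)
    (hineq : ∀ x : ℝ, ∀ t ∈ Ioc (0:ℝ) T,
      0 ≤ vt x t - a x t * vxx x t - b x t * vx x t -
        (∫ y, (v (x + y) t - v x t - (if |y| ≤ 1 then y * vx x t else 0)) ∂ν) +
        c x t * v x t)
    (h0 : ∀ x : ℝ, 0 ≤ v x 0) :
    ∀ x : ℝ, ∀ t ∈ Icc (0:ℝ) T, 0 ≤ v x t := by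
  intro x t ht
  set C₁ := Ma + Mb + ∫ y, levyWeight y ∂ν + 1
  have hC₁ : 0 ≤ C₁ := by
    linarith [(abs_nonneg _).trans (ha_bd x t ht), (abs_nonneg _).trans (hb_bd x t ht),
      integral_nonneg (μ := ν) (f := levyWeight) levyWeight_nonneg]
  have hperturbed : ∀ ε > 0, ∀ x, ∀ t ∈ Icc 0 T, 0 ≤ v x t + ε * barrier C₀ C₁ x t := by
    intro ε hε
    by_contra! ⟨x₁, t₁, ht₁, hneg⟩
    have hfar : ∀ x, ∀ t ∈ Icc 0 T, m / ε + 1 ≤ |x| → 0 < v x t + ε * barrier C₀ C₁ x t :=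
      fun x t ht hx => by linarith [hv_lb x t ht, lt_mul_barrier hC₀ hC₁ ht.1 hε hx]
    obtain ⟨x₀, t₀, ht₀, hzero, hnonneg⟩ := exists_first_zero_of_continuousOn
      (hv_cont.add (continuous_const.mul continuous_barrier).continuousOn)
      (fun x => by simpa using add_pos_of_nonneg_of_pos (h0 x) (mul_pos hε (bracket_pos x)))
      hfar ht₁ hneg.le
    have ht₀' : t₀ ∈ Icc 0 T := Ioc_subset_Icc_self ht₀
    exact (hineq x₀ t₀ ht₀).not_gt <| levyParabolicOperator_neg_of_touching
      (integrable_levyWeight h1 h2) (lt_add_one _) hε ht₀.1 (ha_pos _ _ ht₀') (ha_bd _ _ ht₀')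
      (hb_bd _ _ ht₀') (hc_lb _ _ ht₀') (hvt _ _ ht₀) (fun z => hvx z _ ht₀) (hvxx _ _ ht₀)
      hzero hnonneg
  have hW := barrier_pos (C₀ := C₀) (x := x) hC₁ ht.1
  refine le_of_forall_pos_le_add fun δ hδ => ?_
  simpa [div_mul_cancel₀ _ hW.ne'] using hperturbed (δ / barrier C₀ C₁ x t) (by positivity) x t ht

theorem stmt_13
    (T : ℝ) (hT : 0 < T)
    (a b c : ℝ → ℝ → ℝ)
    (ha_cont : ContinuousOn (fun q : ℝ × ℝ => a q.1 q.2) (univ ×ˢ Icc 0 T))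
    (hb_cont : ContinuousOn (fun q : ℝ × ℝ => b q.1 q.2) (univ ×ˢ Icc 0 T))
    (hc_cont : ContinuousOn (fun q : ℝ × ℝ => c q.1 q.2) (univ ×ˢ Icc 0 T))
    (ha_pos : ∀ x : ℝ, ∀ t ∈ Icc (0:ℝ) T, 0 < a x t)
    (Ma Mb : ℝ)
    (ha_bd : ∀ x : ℝ, ∀ t ∈ Icc (0:ℝ) T, |a x t| ≤ Ma)
    (hb_bd : ∀ x : ℝ, ∀ t ∈ Icc (0:ℝ) T, |b x t| ≤ Mb)
    (C₀ : ℝ) (hC₀ : 0 ≤ C₀)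
    (hc_lb : ∀ x : ℝ, ∀ t ∈ Icc (0:ℝ) T, -C₀ ≤ c x t)
    (ν : Measure ℝ)
    (h1 : IntegrableOn (fun y => y ^ 2) {y : ℝ | |y| ≤ 1} ν)
    (h2 : IntegrableOn (fun y => |y|) {y : ℝ | 1 < |y|} ν)
    (v vt vx vxx : ℝ → ℝ → ℝ)
    (hv_cont : ContinuousOn (fun q : ℝ × ℝ => v q.1 q.2) (univ ×ˢ Icc 0 T))
    (m : ℝ) (hv_lb : ∀ x : ℝ, ∀ t ∈ Icc (0:ℝ) T, -m ≤ v x t)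
    (hvt : ∀ x : ℝ, ∀ t ∈ Ioc (0:ℝ) T, HasDerivAt (fun s => v x s) (vt x t) t)
    (hvx : ∀ x : ℝ, ∀ t ∈ Ioc (0:ℝ) T, HasDerivAt (fun z => v z t) (vx x t) x)
    (hvxx : ∀ x : ℝ, ∀ t ∈ Ioc (0:ℝ) T, HasDerivAt (fun z => vx z t) (vxx x t) x)
    (hineq : ∀ x : ℝ, ∀ t ∈ Ioc (0:ℝ) T,
      0 ≤ vt x t - a x t * vxx x t - b x t * vx x t -
        (∫ y, (v (x + y) t - v x t - (if |y| ≤ 1 then y * vx x t else 0)) ∂ν) +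
        c x t * v x t)
    (h0 : ∀ x : ℝ, 0 ≤ v x 0) :
    ∀ x : ℝ, ∀ t ∈ Icc (0:ℝ) T, 0 ≤ v x t :=
  stmt_13_general T a b c ha_pos Ma Mb ha_bd hb_bd C₀ hC₀ hc_lb ν h1 h2 v vt vx vxx hv_cont m hv_lb
    hvt hvx hvxx hineq h0
end
end
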